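/- arXiv:2408.01859 — 6 statements merged into one kernel-verified Lean document; each statement's English description precedes it below -/
import Mathlib

section
/- Let n ≥ 1, let i, j, k ∈ {1,…,n} be three pairwise distinct indices, let w > 0 and β ∈ ℝ. Let L° ∈ ℝ^{n×n} be the symmetric matrix with L°_{ii} = L°_{jj} = w, L°_{ij} = L°_{ji} = −w, and all other entries 0 (the Laplacian of the single edge (i,j) of weight w). Let ℒ ∈ ℝ^{n×n} be the symmetric matrix whose quadratic form is xᵀℒx = βw(x_i−x_k)² + βw(x_k−x_j)² + (2−β)w·x_i² + (β²−2β)w·x_k² + (2−β)w·x_j² (the generalized Laplacian of the graph with edges (i,k) and (k,j) each of weight βw, self-loops at i and j each of weight (2−β)w, and a self-loop at k of weight (β²−2β)w). Then ℒ − L° is positive semidefinite. -/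
/-! The quadratic form of `L - L0` is the perfect square `w (x i + x j - β x k) ^ 2`. -/

open Matrix

namespace Matrix

variable {n : Type*} [DecidableEq n]

def edgeLaplacian (i j : n) (w : ℝ) : Matrix n n ℝ :=
  w • vecMulVec (Pi.single i 1 - Pi.single j 1) (Pi.single i 1 - Pi.single j 1)

theorem edgeLaplacian_eq_of_ne {i j : n} (hij : i ≠ j) (w : ℝ) :
    edgeLaplacian i j w = Matrix.of fun a b =>
      if (a = i ∧ b = i) ∨ (a = j ∧ b = j) then w
      else if (a = i ∧ b = j) ∨ (a = j ∧ b = i) then -w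
      else 0 := by
  ext a b
  by_cases hai : a = i <;> by_cases haj : a = j <;> by_cases hbi : b = i <;>
    by_cases hbj : b = j <;>
      simp_all [edgeLaplacian, vecMulVec_apply, hij.symm]

theorem isSymm_edgeLaplacian (i j : n) (w : ℝ) : (edgeLaplacian i j w).IsSymm := by
  simp [IsSymm, edgeLaplacian, transpose_vecMulVec]

theorem dotProduct_edgeLaplacian_mulVec [Fintype n] (i j : n) (w : ℝ) (x : n → ℝ) :
    x ⬝ᵥ edgeLaplacian i j w *ᵥ x = w * (x i - x j) ^ 2 := by
  simp only [edgeLaplacian, smul_mulVec, vecMulVec_mulVec, dotProduct_smul, sub_dotProduct,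
    dotProduct_sub, single_dotProduct, dotProduct_single, op_smul_eq_mul, smul_eq_mul, one_mul,
    mul_one]
  ring

end Matrix

theorem stmt2_general {n : ℕ} (i j k : Fin n)
    (hij : i ≠ j)
    (w β : ℝ) (hw : 0 < w)
    (L0 : Matrix (Fin n) (Fin n) ℝ)
    (hL0 : L0 = Matrix.of fun a b =>
      if (a = i ∧ b = i) ∨ (a = j ∧ b = j) then w
      else if (a = i ∧ b = j) ∨ (a = j ∧ b = i) then -w
      else 0)
    (L : Matrix (Fin n) (Fin n) ℝ) (hLsym : L.IsSymm)
    (hquad : ∀ x : Fin n → ℝ,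
      x ⬝ᵥ L.mulVec x =
        β * w * (x i - x k) ^ 2 + β * w * (x k - x j) ^ 2
          + (2 - β) * w * (x i) ^ 2 + (β ^ 2 - 2 * β) * w * (x k) ^ 2
          + (2 - β) * w * (x j) ^ 2) :
    (L - L0).PosSemidef := by
  rw [hL0, ← edgeLaplacian_eq_of_ne hij]
  refine .of_dotProduct_mulVec_nonneg
    (isHermitian_iff_isSymm.mpr (hLsym.sub (isSymm_edgeLaplacian i j w))) fun x => ?_
  rw [star_trivial, sub_mulVec, dotProduct_sub, hquad, dotProduct_edgeLaplacian_mulVec]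
  calc 0 ≤ w * (x i + x j - β * x k) ^ 2 := by positivity
    _ = _ := by ring

/-- Theorem 1 of the paper: replacing an edge (i,j) of weight w > 0 by
edges (i,k), (k,j) of weight βw, self-loops at i and j of weight (2−β)w, and a self-loop at
k of weight (β²−2β)w yields a generalized Laplacian ℒ with ℒ − L° positive semidefinite. -/
theorem stmt2 {n : ℕ} (hn : 1 ≤ n) (i j k : Fin n)
    (hij : i ≠ j) (hik : i ≠ k) (hjk : j ≠ k)
    (w β : ℝ) (hw : 0 < w)
    (L0 : Matrix (Fin n) (Fin n) ℝ)
    (hL0 : L0 = Matrix.of fun a b =>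
      if (a = i ∧ b = i) ∨ (a = j ∧ b = j) then w
      else if (a = i ∧ b = j) ∨ (a = j ∧ b = i) then -w
      else 0)
    (L : Matrix (Fin n) (Fin n) ℝ) (hLsym : L.IsSymm)
    (hquad : ∀ x : Fin n → ℝ,
      x ⬝ᵥ L.mulVec x =
        β * w * (x i - x k) ^ 2 + β * w * (x k - x j) ^ 2
          + (2 - β) * w * (x i) ^ 2 + (β ^ 2 - 2 * β) * w * (x k) ^ 2
          + (2 - β) * w * (x j) ^ 2) :
    (L - L0).PosSemidef :=
  stmt2_general i j k hij w β hw L0 hL0 L hLsym hquad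
end

section
/- Let W ∈ ℝ^{n×n} be symmetric with nonnegative entries, and suppose the graph on nodes {1,…,n} with an edge between distinct i and j whenever W_{ij} > 0 is connected (for every pair of distinct nodes i, j there exist indices i = p_0, p_1, …, p_m = j with W_{p_t p_{t+1}} > 0 for all t). Let ℒ = D − W + Diag(W_{11},…,W_{nn}) be the generalized graph Laplacian, where D_{ii} = Σ_j W_{ij}. Let h ∈ {0,1}ⁿ be a binary vector with at least one entry equal to 1, and let μ > 0. Then the matrix B = Diag(h) + μℒ is positive definite. -/
/-!
The quadratic form of the generalized Laplacian is `½ ∑ᵢⱼ Wᵢⱼ (xᵢ - xⱼ)² + ∑ᵢ Wᵢᵢ xᵢ²`, so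
`B = Diag(h) + μℒ` is a sum of two positive semidefinite matrices. If `xᵀBx = 0`, both forms
vanish at `x`: the second forces `xᵢ = xⱼ` across every edge, so `x` is constant by
connectivity, and the first forces `x` to vanish at a sampled node. Hence `x = 0`.
-/

open Matrix

theorem eq_zero_of_sum_mul_sq_eq_zero {ι : Type*} [Fintype ι] {w y : ι → ℝ}
    (hw : ∀ i, 0 ≤ w i) (hsum : ∑ i, w i * y i ^ 2 = 0) {i : ι} (hi : 0 < w i) : y i = 0 := by
  have := (Fintype.sum_eq_zero_iff_of_nonneg fun i => mul_nonneg (hw i) (sq_nonneg _)).1 hsum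
  simpa [hi.ne'] using congrFun this i

theorem Fin.apply_last_eq_apply_zero {α : Type*} {m : ℕ} {g : Fin (m + 1) → α}
    (hg : ∀ t : Fin m, g t.castSucc = g t.succ) : g (Fin.last m) = g 0 := by
  suffices ∀ t, g t = g 0 from this _
  intro t
  induction t using Fin.induction with
  | zero => rfl
  | succ t ih => rw [← hg t, ih]

theorem apply_eq_of_forall_chain {ι α : Type*} {r : ι → ι → Prop}
    (hr : ∀ i j, i ≠ j → ∃ (m : ℕ) (p : Fin (m + 1) → ι),
      p 0 = i ∧ p (Fin.last m) = j ∧ ∀ t : Fin m, r (p t.castSucc) (p t.succ))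
    {f : ι → α} (hf : ∀ i j, r i j → f i = f j) (i j : ι) : f i = f j := by
  obtain rfl | hij := eq_or_ne i j
  · rfl
  obtain ⟨m, p, rfl, rfl, hp⟩ := hr i j hij
  exact (Fin.apply_last_eq_apply_zero (g := f ∘ p) fun t => hf _ _ (hp t)).symm

namespace Matrix

variable {ι : Type*} [Fintype ι]

theorem PosSemidef.posDef_add_of_forall {R : Type*} [CommRing R] [PartialOrder R] [StarRing R]
    [IsStrictOrderedRing R] {A B : Matrix ι ι R} (hA : A.PosSemidef) (hB : B.PosSemidef)
    (hAB : ∀ x, star x ⬝ᵥ (A *ᵥ x) = 0 → star x ⬝ᵥ (B *ᵥ x) = 0 → x = 0) :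
    (A + B).PosDef := by
  refine posDef_iff_dotProduct_mulVec.2 ⟨hA.1.add hB.1, fun x hx => ?_⟩
  have ha := hA.dotProduct_mulVec_nonneg x
  have hb := hB.dotProduct_mulVec_nonneg x
  rw [add_mulVec, dotProduct_add]
  rcases ha.lt_or_eq with ha | ha
  · exact add_pos_of_pos_of_nonneg ha hb
  · exact add_pos_of_nonneg_of_pos ha.le
      (hb.lt_of_ne fun hb' => hx (hAB x ha.symm hb'.symm))

variable [DecidableEq ι]

theorem dotProduct_diagonal_mulVec (d x : ι → ℝ) :
    x ⬝ᵥ (diagonal d *ᵥ x) = ∑ i, d i * x i ^ 2 :=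
  Finset.sum_congr rfl fun i _ => by rw [mulVec_diagonal]; ring

def genLaplacian (W : Matrix ι ι ℝ) : Matrix ι ι ℝ :=
  diagonal (fun i => ∑ j, W i j) - W + diagonal (fun i => W i i)

theorem dotProduct_genLaplacian_mulVec {W : Matrix ι ι ℝ} (hW : W.IsSymm) (x : ι → ℝ) :
    x ⬝ᵥ (genLaplacian W *ᵥ x)
      = (∑ i, ∑ j, W i j * (x i - x j) ^ 2) / 2 + ∑ i, W i i * x i ^ 2 := by
  have hsplit : ∑ i, ∑ j, W i j * (x i - x j) ^ 2
      = ∑ i, ∑ j, W i j * x i ^ 2 + ∑ i, ∑ j, W i j * x j ^ 2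
        - 2 * ∑ i, ∑ j, x i * (W i j * x j) := by
    simp only [Finset.mul_sum, ← Finset.sum_add_distrib, ← Finset.sum_sub_distrib]
    exact Fintype.sum_congr _ _ fun i => Fintype.sum_congr _ _ fun j => by ring
  have hswap : ∑ i, ∑ j, W i j * x j ^ 2 = ∑ i, ∑ j, W i j * x i ^ 2 := by
    rw [Finset.sum_comm]
    simp only [hW.apply]
  have hWx : x ⬝ᵥ (W *ᵥ x) = ∑ i, ∑ j, x i * (W i j * x j) := by
    simp only [dotProduct, mulVec, Finset.mul_sum]
  rw [genLaplacian, add_mulVec, sub_mulVec, dotProduct_add, dotProduct_sub,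
    dotProduct_diagonal_mulVec, dotProduct_diagonal_mulVec, hWx, hsplit, hswap]
  simp only [Finset.sum_mul]
  ring

theorem genLaplacian_posSemidef {W : Matrix ι ι ℝ} (hW : W.IsSymm) (hnn : ∀ i j, 0 ≤ W i j) :
    (genLaplacian W).PosSemidef := by
  refine .of_dotProduct_mulVec_nonneg ?_ fun x => ?_
  · rw [IsHermitian, conjTranspose_eq_transpose_of_trivial, genLaplacian, transpose_add,
      transpose_sub, diagonal_transpose, diagonal_transpose, hW.eq]
  · rw [star_trivial, dotProduct_genLaplacian_mulVec hW]
    have hterm (i j : ι) : 0 ≤ W i j * (x i - x j) ^ 2 := mul_nonneg (hnn i j) (sq_nonneg _)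
    have hloop (i : ι) : 0 ≤ W i i * x i ^ 2 := mul_nonneg (hnn i i) (sq_nonneg _)
    exact add_nonneg (div_nonneg (Fintype.sum_nonneg fun i => Fintype.sum_nonneg (hterm i))
      zero_le_two) (Fintype.sum_nonneg hloop)

theorem eq_of_dotProduct_genLaplacian_mulVec_eq_zero {W : Matrix ι ι ℝ} (hW : W.IsSymm)
    (hnn : ∀ i j, 0 ≤ W i j) {x : ι → ℝ} (hx : x ⬝ᵥ (genLaplacian W *ᵥ x) = 0) {i j : ι}
    (hij : 0 < W i j) : x i = x j := by
  have hterm (i j : ι) : 0 ≤ W i j * (x i - x j) ^ 2 := mul_nonneg (hnn i j) (sq_nonneg _)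
  have hloop (i : ι) : 0 ≤ W i i * x i ^ 2 := mul_nonneg (hnn i i) (sq_nonneg _)
  have hedges : ∑ p : ι × ι, W p.1 p.2 * (x p.1 - x p.2) ^ 2 = 0 := by
    rw [dotProduct_genLaplacian_mulVec hW] at hx
    have : 0 ≤ ∑ i, ∑ j, W i j * (x i - x j) ^ 2 :=
      Fintype.sum_nonneg fun i => Fintype.sum_nonneg (hterm i)
    have : 0 ≤ ∑ i, W i i * x i ^ 2 := Fintype.sum_nonneg hloop
    rw [Fintype.sum_prod_type]
    linarith
  exact sub_eq_zero.1 <| eq_zero_of_sum_mul_sq_eq_zero (w := fun p => W p.1 p.2)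
    (fun p => hnn p.1 p.2) hedges (i := (i, j)) hij

end Matrix

/-- the paper's Lemma 1: for a connected positive graph (possibly with
self-loops) with generalized Laplacian ℒ, a binary vector h with at least one 1, and μ > 0,
the coefficient matrix B = Diag(h) + μℒ is positive definite. -/
theorem stmt6 {n : ℕ} (W : Matrix (Fin n) (Fin n) ℝ)
    (hsym : W.IsSymm) (hnn : ∀ i j, 0 ≤ W i j)
    (hconn : ∀ i j : Fin n, i ≠ j → ∃ (m : ℕ) (p : Fin (m + 1) → Fin n),
      p 0 = i ∧ p (Fin.last m) = j ∧ ∀ t : Fin m, 0 < W (p t.castSucc) (p t.succ))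
    (h : Fin n → ℝ) (hbin : ∀ i, h i = 0 ∨ h i = 1) (hone : ∃ i, h i = 1)
    (μ : ℝ) (hμ : 0 < μ) :
    (Matrix.diagonal h
      + μ • (Matrix.diagonal (fun i => ∑ j, W i j) - W
              + Matrix.diagonal (fun i => W i i))).PosDef := by
  obtain ⟨i₀, hi₀⟩ := hone
  have hh (i : Fin n) : 0 ≤ h i := by rcases hbin i with hi | hi <;> simp [hi]
  refine (posSemidef_diagonal_iff.2 hh).posDef_add_of_forall
    ((genLaplacian_posSemidef hsym hnn).smul hμ.le) fun x hdiag hlap => ?_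
  rw [star_trivial, dotProduct_diagonal_mulVec] at hdiag
  rw [star_trivial, smul_mulVec, dotProduct_smul, smul_eq_mul, mul_eq_zero,
    or_iff_right hμ.ne'] at hlap
  have hconst : ∀ i j, x i = x j := apply_eq_of_forall_chain hconn
    fun _ _ => eq_of_dotProduct_genLaplacian_mulVec_eq_zero hsym hnn hlap
  have hx₀ : x i₀ = 0 := eq_zero_of_sum_mul_sq_eq_zero hh hdiag (hi₀ ▸ one_pos)
  funext i
  rw [hconst i i₀, hx₀, Pi.zero_apply]
end

section
/- Let n = n₁ + n₂ and let W ∈ ℝ^{n×n} be symmetric with nonnegative entries. Let W′ be the block-diagonal matrix W′ = diag(W′₁, W′₂) with W′₁ ∈ ℝ^{n₁×n₁}, W′₂ ∈ ℝ^{n₂×n₂}, obtained from W by setting to zero every off-diagonal entry W_{ij} with i in the first block and j in the second block (and keeping all other entries: W′ agrees with W within each block, including diagonals). Let ℒ be the generalized graph Laplacian of W, and let ℒ′₁, ℒ′₂ be the generalized graph Laplacians of W′₁ and W′₂. Write h = (h₁, h₂) ∈ {0,1}ⁿ split conformally, and let μ > 0. Then min( λ_min(Diag(h₁) + μℒ′₁),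 λ_min(Diag(h₂) + μℒ′₂) ) ≤ λ_min(Diag(h) + μℒ). -/
open Matrix

/-- The generalized graph Laplacian ℒ = D − W + Diag(W₁₁,…,Wₙₙ). -/
noncomputable def genLap {ι : Type} [Fintype ι] [DecidableEq ι]
    (W : Matrix ι ι ℝ) : Matrix ι ι ℝ :=
  Matrix.diagonal (fun i => ∑ j, W i j) - W + Matrix.diagonal (fun i => W i i)

/-- The smallest eigenvalue of a real symmetric matrix, as the infimum of the quadratic
form xᵀAx over unit vectors x. -/
noncomputable def lamMin {ι : Type} [Fintype ι] (A : Matrix ι ι ℝ) : ℝ :=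
  ⨅ x : {x : ι → ℝ // ∑ i, (x i) ^ 2 = 1}, x.1 ⬝ᵥ A.mulVec x.1

lemma quad_eq {ι : Type} [Fintype ι] (A : Matrix ι ι ℝ) (y : ι → ℝ) :
    y ⬝ᵥ A.mulVec y = ∑ i, ∑ j, A i j * (y i * y j) := by
  simp [dotProduct, mulVec, Finset.mul_sum]
  exact Finset.sum_congr rfl fun i _ => Finset.sum_congr rfl fun j _ => by ring

lemma quad_diag {ι : Type} [Fintype ι] [DecidableEq ι] (g : ι → ℝ) (y : ι → ℝ) :
    y ⬝ᵥ (Matrix.diagonal g).mulVec y = ∑ i, g i * y i ^ 2 := by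
  simp [dotProduct, mulVec_diagonal]
  exact Finset.sum_congr rfl fun i _ => by ring

lemma quad_block {ι : Type} [Fintype ι] [DecidableEq ι] (B : Matrix ι ι ℝ)
    (g : ι → ℝ) (μ : ℝ) (y : ι → ℝ) :
    y ⬝ᵥ (Matrix.diagonal g + μ • genLap B).mulVec y
      = (∑ i, g i * y i ^ 2)
        + μ * ((∑ i, ∑ j, B i j * y i ^ 2) - (∑ i, ∑ j, B i j * (y i * y j))
            + ∑ i, B i i * y i ^ 2) := by
  unfold genLap
  rw [add_mulVec, dotProduct_add, smul_mulVec, dotProduct_smul, add_mulVec, sub_mulVec,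
    dotProduct_add, dotProduct_sub, quad_diag, quad_diag, quad_diag, quad_eq]
  simp only [smul_eq_mul]
  simp_rw [Finset.sum_mul]

lemma lamMin_le {ι : Type} [Fintype ι] (A : Matrix ι ι ℝ) (x : ι → ℝ)
    (hx : ∑ i, x i ^ 2 = 1) : lamMin A ≤ x ⬝ᵥ A.mulVec x := by
  have habs : ∀ y : ι → ℝ, (∑ i, y i ^ 2 = 1) →
      -(∑ i, ∑ j, |A i j|) ≤ y ⬝ᵥ A.mulVec y := by
    intro y hy
    have h1 : ∀ i, |y i| ≤ 1 := by
      intro i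
      have h2 : y i ^ 2 ≤ 1 := by
        rw [← hy]
        exact Finset.single_le_sum (fun j _ => sq_nonneg (y j)) (Finset.mem_univ i)
      nlinarith [abs_nonneg (y i), sq_abs (y i)]
    rw [quad_eq]
    have h2 : |∑ i, ∑ j, A i j * (y i * y j)| ≤ ∑ i, ∑ j, |A i j| := by
      calc |∑ i, ∑ j, A i j * (y i * y j)| ≤ ∑ i, |∑ j, A i j * (y i * y j)| :=
            Finset.abs_sum_le_sum_abs _ _
        _ ≤ ∑ i, ∑ j, |A i j * (y i * y j)| :=
            Finset.sum_le_sum fun i _ => Finset.abs_sum_le_sum_abs _ _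
        _ ≤ ∑ i, ∑ j, |A i j| := by
            refine Finset.sum_le_sum fun i _ => Finset.sum_le_sum fun j _ => ?_
            rw [abs_mul, abs_mul]
            exact mul_le_of_le_one_right (abs_nonneg _)
              (mul_le_one₀ (h1 i) (abs_nonneg _) (h1 j))
    linarith [neg_abs_le (∑ i, ∑ j, A i j * (y i * y j)), h2]
  have hbdd : BddBelow (Set.range fun y : {x : ι → ℝ // ∑ i, (x i) ^ 2 = 1} =>
      y.1 ⬝ᵥ A.mulVec y.1) := by
    refine ⟨-(∑ i, ∑ j, |A i j|), ?_⟩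
    rintro r ⟨y, rfl⟩
    exact habs y.1 y.2
  exact ciInf_le hbdd ⟨x, hx⟩

lemma lamMin_mul_le {ι : Type} [Fintype ι] (A : Matrix ι ι ℝ) (x : ι → ℝ) :
    lamMin A * (∑ i, x i ^ 2) ≤ x ⬝ᵥ A.mulVec x := by
  set s := ∑ i, x i ^ 2 with hs_def
  have hs0 : 0 ≤ s := Finset.sum_nonneg fun i _ => sq_nonneg _
  rcases eq_or_lt_of_le hs0 with hs | hs
  · have hx : ∀ i, x i = 0 := by
      intro i
      have h0 := (Finset.sum_eq_zero_iff_of_nonneg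
        (fun j (_ : j ∈ Finset.univ) => sq_nonneg (x j))).mp hs.symm i (Finset.mem_univ i)
      exact pow_eq_zero_iff (two_ne_zero) |>.mp h0
    rw [quad_eq, ← hs]
    simp [hx]
  · set y := fun i => x i / Real.sqrt s with hy_def
    have hsq : Real.sqrt s * Real.sqrt s = s := Real.mul_self_sqrt hs0
    have hy : ∑ i, y i ^ 2 = 1 := by
      simp only [hy_def, div_pow, Real.sq_sqrt hs0, ← Finset.sum_div, ← hs_def]
      exact div_self (ne_of_gt hs)
    have h2 := lamMin_le A y hy
    have hq : y ⬝ᵥ A.mulVec y = (x ⬝ᵥ A.mulVec x) / s := by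
      rw [quad_eq, quad_eq, Finset.sum_div]
      refine Finset.sum_congr rfl fun i _ => ?_
      rw [Finset.sum_div]
      refine Finset.sum_congr rfl fun j _ => ?_
      have hyy : y i * y j = x i * x j / s := by
        rw [hy_def]
        rw [div_mul_div_comm, hsq]
      rw [hyy]; ring
    rw [hq] at h2
    calc lamMin A * s ≤ ((x ⬝ᵥ A.mulVec x) / s) * s := by
          exact mul_le_mul_of_nonneg_right h2 hs0
      _ = x ⬝ᵥ A.mulVec x := by field_simp

lemma le_lamMin {ι : Type} [Fintype ι] [Nonempty ι] (A : Matrix ι ι ℝ) (c : ℝ)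
    (hc : ∀ x : ι → ℝ, ∑ i, x i ^ 2 = 1 → c ≤ x ⬝ᵥ A.mulVec x) : c ≤ lamMin A := by
  have : Nonempty {x : ι → ℝ // ∑ i, (x i) ^ 2 = 1} := by
    classical
    exact ⟨⟨fun i => if i = Classical.arbitrary ι then 1 else 0, by
      simp [apply_ite (fun t : ℝ => t ^ 2), Finset.sum_ite_eq']⟩⟩
  exact le_ciInf fun x => hc x.1 x.2

/-- Corollary 3 of the paper, divide-and-conquer: for W on n₁ + n₂ nodes
with diagonal blocks W′₁, W′₂, a binary vector h split conformally as (h₁, h₂), and μ > 0,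
min(λ_min(Diag(h₁) + μℒ′₁), λ_min(Diag(h₂) + μℒ′₂)) ≤ λ_min(Diag(h) + μℒ). -/
theorem stmt9 {n₁ n₂ : ℕ}
    (W : Matrix (Fin n₁ ⊕ Fin n₂) (Fin n₁ ⊕ Fin n₂) ℝ)
    (hsym : W.IsSymm) (hnn : ∀ i j, 0 ≤ W i j)
    (W1' : Matrix (Fin n₁) (Fin n₁) ℝ) (W2' : Matrix (Fin n₂) (Fin n₂) ℝ)
    (hW1 : ∀ i j, W1' i j = W (Sum.inl i) (Sum.inl j))
    (hW2 : ∀ i j, W2' i j = W (Sum.inr i) (Sum.inr j))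
    (h : Fin n₁ ⊕ Fin n₂ → ℝ) (hbin : ∀ i, h i = 0 ∨ h i = 1)
    (μ : ℝ) (hμ : 0 < μ) :
    min (lamMin (Matrix.diagonal (h ∘ Sum.inl) + μ • genLap W1'))
        (lamMin (Matrix.diagonal (h ∘ Sum.inr) + μ • genLap W2'))
      ≤ lamMin (Matrix.diagonal h + μ • genLap W) := by
  rcases isEmpty_or_nonempty (Fin n₁ ⊕ Fin n₂) with he | hne
  · have he1 : IsEmpty (Fin n₁) := ⟨fun i => he.elim (Sum.inl i)⟩
    have he2 : IsEmpty (Fin n₂) := ⟨fun i => he.elim (Sum.inr i)⟩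
    have hemp : ∀ {κ : Type} [inst : Fintype κ], IsEmpty κ →
        ∀ (A : Matrix κ κ ℝ), lamMin A = 0 := by
      intro κ _ hk A
      have : IsEmpty {x : κ → ℝ // ∑ i, (x i) ^ 2 = 1} := by
        constructor; rintro ⟨x, hx⟩
        rw [Finset.sum_of_isEmpty] at hx
        norm_num at hx
      rw [lamMin, iInf_of_isEmpty, Real.sInf_empty]
    rw [hemp he, hemp he1, hemp he2]
    simp
  · refine le_lamMin _ _ fun x hx => ?_
    set x₁ : Fin n₁ → ℝ := fun i => x (Sum.inl i) with hx₁
    set x₂ : Fin n₂ → ℝ := fun i => x (Sum.inr i) with hx₂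
    have hsplit : (∑ i, x₁ i ^ 2) + (∑ i, x₂ i ^ 2) = 1 := by
      rw [← hx, Fintype.sum_sum_type]
    have hq1 := lamMin_mul_le (Matrix.diagonal (h ∘ Sum.inl) + μ • genLap W1') x₁
    have hq2 := lamMin_mul_le (Matrix.diagonal (h ∘ Sum.inr) + μ • genLap W2') x₂
    have hs1 : 0 ≤ ∑ i, x₁ i ^ 2 := Finset.sum_nonneg fun i _ => sq_nonneg _
    have hs2 : 0 ≤ ∑ i, x₂ i ^ 2 := Finset.sum_nonneg fun i _ => sq_nonneg _
    have hineq : (x₁ ⬝ᵥ (Matrix.diagonal (h ∘ Sum.inl) + μ • genLap W1').mulVec x₁)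
        + (x₂ ⬝ᵥ (Matrix.diagonal (h ∘ Sum.inr) + μ • genLap W2').mulVec x₂)
        ≤ x ⬝ᵥ (Matrix.diagonal h + μ • genLap W).mulVec x := by
      rw [quad_block, quad_block, quad_block]
      simp only [Fintype.sum_sum_type, hW1, hW2, Function.comp, hx₁, hx₂,
        Finset.sum_add_distrib]
      have hsymm : ∀ (a : Fin n₁) (b : Fin n₂),
          W (Sum.inr b) (Sum.inl a) = W (Sum.inl a) (Sum.inr b) := fun a b => hsym.apply _ _
      have hs21 : ∑ a₂ : Fin n₂, ∑ a₁ : Fin n₁,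
            W (Sum.inr a₂) (Sum.inl a₁) * x (Sum.inr a₂) ^ 2
          = ∑ a₁ : Fin n₁, ∑ a₂ : Fin n₂,
            W (Sum.inl a₁) (Sum.inr a₂) * x (Sum.inr a₂) ^ 2 := by
        rw [Finset.sum_comm]
        exact Finset.sum_congr rfl fun a _ => Finset.sum_congr rfl fun b _ => by
          rw [hsymm]
      have hc21 : ∑ a₂ : Fin n₂, ∑ a₁ : Fin n₁,
            W (Sum.inr a₂) (Sum.inl a₁) * (x (Sum.inr a₂) * x (Sum.inl a₁))
          = ∑ a₁ : Fin n₁, ∑ a₂ : Fin n₂,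
            W (Sum.inl a₁) (Sum.inr a₂) * (x (Sum.inl a₁) * x (Sum.inr a₂)) := by
        rw [Finset.sum_comm]
        exact Finset.sum_congr rfl fun a _ => Finset.sum_congr rfl fun b _ => by
          rw [hsymm]; ring
      rw [hs21, hc21]
      have hkey : (∑ a₁ : Fin n₁, ∑ a₂ : Fin n₂,
            W (Sum.inl a₁) (Sum.inr a₂) * (x (Sum.inl a₁) * x (Sum.inr a₂)))
          + (∑ a₁ : Fin n₁, ∑ a₂ : Fin n₂,
            W (Sum.inl a₁) (Sum.inr a₂) * (x (Sum.inl a₁) * x (Sum.inr a₂)))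
          ≤ (∑ a₁ : Fin n₁, ∑ a₂ : Fin n₂,
            W (Sum.inl a₁) (Sum.inr a₂) * x (Sum.inl a₁) ^ 2)
          + (∑ a₁ : Fin n₁, ∑ a₂ : Fin n₂,
            W (Sum.inl a₁) (Sum.inr a₂) * x (Sum.inr a₂) ^ 2) := by
        rw [← Finset.sum_add_distrib, ← Finset.sum_add_distrib]
        refine Finset.sum_le_sum fun a _ => ?_
        rw [← Finset.sum_add_distrib, ← Finset.sum_add_distrib]
        refine Finset.sum_le_sum fun b _ => ?_
        nlinarith [hnn (Sum.inl a) (Sum.inr b),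
          sq_nonneg (x (Sum.inl a) - x (Sum.inr b))]
      have hfin := mul_le_mul_of_nonneg_left hkey (le_of_lt hμ)
      simp only [mul_add, mul_sub] at hfin ⊢
      linarith
    have hmin1 : min (lamMin (Matrix.diagonal (h ∘ Sum.inl) + μ • genLap W1'))
        (lamMin (Matrix.diagonal (h ∘ Sum.inr) + μ • genLap W2')) * (∑ i, x₁ i ^ 2)
        ≤ lamMin (Matrix.diagonal (h ∘ Sum.inl) + μ • genLap W1') * (∑ i, x₁ i ^ 2) :=
      mul_le_mul_of_nonneg_right (min_le_left _ _) hs1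
    have hmin2 : min (lamMin (Matrix.diagonal (h ∘ Sum.inl) + μ • genLap W1'))
        (lamMin (Matrix.diagonal (h ∘ Sum.inr) + μ • genLap W2')) * (∑ i, x₂ i ^ 2)
        ≤ lamMin (Matrix.diagonal (h ∘ Sum.inr) + μ • genLap W2') * (∑ i, x₂ i ^ 2) :=
      mul_le_mul_of_nonneg_right (min_le_right _ _) hs2
    set m := min (lamMin (Matrix.diagonal (h ∘ Sum.inl) + μ • genLap W1'))
      (lamMin (Matrix.diagonal (h ∘ Sum.inr) + μ • genLap W2')) with hm
    calc m = m * ((∑ i, x₁ i ^ 2) + (∑ i, x₂ i ^ 2)) := by rw [hsplit, mul_one]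
      _ = m * (∑ i, x₁ i ^ 2) + m * (∑ i, x₂ i ^ 2) := by ring
      _ ≤ lamMin (Matrix.diagonal (h ∘ Sum.inl) + μ • genLap W1') * (∑ i, x₁ i ^ 2)
          + lamMin (Matrix.diagonal (h ∘ Sum.inr) + μ • genLap W2') * (∑ i, x₂ i ^ 2) :=
        add_le_add hmin1 hmin2
      _ ≤ _ := add_le_add hq1 hq2
      _ ≤ _ := hineq
end

section
/- Let k ≥ 2 and let ℒ ∈ ℝ^{k×k} be a tridiagonal generalized graph Laplacian of a 1-hop path graph: ℒ_{i,i+1} = ℒ_{i+1,i} = −W_{i,i+1} with edge weights W_{i,i+1} > 0 for 1 ≤ i ≤ k−1, ℒ_{i,i} = W_{i−1,i} + W_{i,i+1} + u_i with self-loop weights u_i ≥ 0 (conventions W_{0,1} = W_{k,k+1} = 0), and all other entries zero. Let T ∈ ℝ be a threshold. Define scalars recursively: s₁ˡ = 1; for 1 ≤ i ≤ k−1, s_{i+1}ˡ = s_iˡ · W_{i,i+1} / (ℒ_{i,i} − s_iˡ · W_{i−1,i} − T); and define s_kᵘ = (ℒ_{k,k} + 1 − T) / ((s_{k−1}ˡ)⁻¹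 · W_{k−1,k}). Assume that for each 1 ≤ i ≤ k−1 the denominator ℒ_{i,i} − s_iˡ W_{i−1,i} − T is positive, that s_iˡ ≥ 1 for all 1 ≤ i ≤ k−1, and that s_kᵘ ≥ s_kˡ. Let S = Diag(s₁ˡ, …, s_{k−1}ˡ, s_kᵘ) and let B = Diag(e_k) + ℒ, where e_k ∈ {0,1}^k is the canonical vector with a single 1 in entry k. Then every Gershgorin disc left-end of S B S⁻¹ is at least T; that is, for every row i, (S B S⁻¹)_{ii} − Σ_{j≠i} |(S B S⁻¹)_{ij}| ≥ T, and hence λ⁻_min(S B S⁻¹) ≥ T. -/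
open Matrix

private lemma sum_ite_fin {k : ℕ} (m : ℕ) (c : Fin k → ℝ) :
    ∑ j : Fin k, (if (j : ℕ) = m then c j else 0)
      = if hm : m < k then c ⟨m, hm⟩ else 0 := by
  split
  · next hm =>
    rw [show (fun j : Fin k => if (j : ℕ) = m then c j else 0)
        = fun j => if j = ⟨m, hm⟩ then c j else 0 by
      funext j; simp [Fin.ext_iff]]
    simp [Finset.sum_ite_eq']
  · next hm =>
    exact Finset.sum_eq_zero (fun j _ => if_neg (by have := j.isLt; omega))


/-- Lemma 3 of the paper: for a tridiagonal generalized path-graph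
Laplacian ℒ on k ≥ 2 nodes (nodes indexed 1,…,k in the paper, here node i is the Fin value
i−1; w i = W_{i,i+1} for 1 ≤ i ≤ k−1, with conventions w 0 = W_{0,1} = 0 and
w k = W_{k,k+1} = 0; self-loop weights u i ≥ 0), with upstream scalars
s₁ˡ = 1, s_{i+1}ˡ = s_iˡ W_{i,i+1}/(ℒ_{i,i} − s_iˡ W_{i−1,i} − T) and
s_kᵘ = (ℒ_{k,k} + 1 − T)/((s_{k−1}ˡ)⁻¹ W_{k−1,k}), assuming positive denominators,
s_iˡ ≥ 1 for 1 ≤ i ≤ k−1 and s_kᵘ ≥ s_kˡ, every Gershgorin disc left-end of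
S B S⁻¹ is at least T, where S = Diag(s₁ˡ,…,s_{k−1}ˡ, s_kᵘ) and B = Diag(e_k) + ℒ. -/
theorem stmt10 (k : ℕ) (hk : 2 ≤ k)
    (w u : ℕ → ℝ)
    (hw0 : w 0 = 0) (hwk : w k = 0)
    (hwpos : ∀ i, 1 ≤ i → i ≤ k - 1 → 0 < w i)
    (hu : ∀ i, 1 ≤ i → i ≤ k → 0 ≤ u i)
    (L : Matrix (Fin k) (Fin k) ℝ)
    (hL : ∀ a b : Fin k, L a b =
      if a = b then w a.val + w (a.val + 1) + u (a.val + 1)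
      else if (b : ℕ) = a.val + 1 then -(w (a.val + 1))
      else if (a : ℕ) = b.val + 1 then -(w (b.val + 1))
      else 0)
    (T : ℝ)
    (sl : ℕ → ℝ) (su : ℝ)
    (hsl1 : sl 1 = 1)
    (hslrec : ∀ i, 1 ≤ i → i ≤ k - 1 →
      sl (i + 1) = sl i * w i / ((w (i - 1) + w i + u i) - sl i * w (i - 1) - T))
    (hsu : su = ((w (k - 1) + w k + u k) + 1 - T) / ((sl (k - 1))⁻¹ * w (k - 1)))
    (hden : ∀ i, 1 ≤ i → i ≤ k - 1 →
      0 < (w (i - 1) + w i + u i) - sl i * w (i - 1) - T)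
    (hslge : ∀ i, 1 ≤ i → i ≤ k - 1 → 1 ≤ sl i)
    (hsuge : sl k ≤ su)
    (S B : Matrix (Fin k) (Fin k) ℝ)
    (hS : S = Matrix.diagonal
      (fun a : Fin k => if a.val = k - 1 then su else sl (a.val + 1)))
    (hB : B = Matrix.diagonal
      (fun a : Fin k => if a.val = k - 1 then (1 : ℝ) else 0) + L) :
    ∀ i : Fin k,
      T ≤ (S * B * S⁻¹) i i
            - ∑ j ∈ Finset.univ.filter (fun j => j ≠ i), |(S * B * S⁻¹) i j| := by
  intro i
  have hk1 : 1 ≤ k - 1 := by omega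
  have hslpos : ∀ n, 1 ≤ n → n ≤ k - 1 → 0 < sl n :=
    fun n h1 h2 => lt_of_lt_of_le one_pos (hslge n h1 h2)
  have hslk : 0 < sl k := by
    have h := hslrec (k - 1) hk1 le_rfl
    rw [show k - 1 + 1 = k by omega] at h
    rw [h]
    exact div_pos (mul_pos (hslpos _ hk1 le_rfl) (hwpos _ hk1 le_rfl))
      (hden _ hk1 le_rfl)
  have hsupos : 0 < su := lt_of_lt_of_le hslk hsuge
  set s : Fin k → ℝ := fun a => if (a : ℕ) = k - 1 then su else sl (a.val + 1)
    with hsdef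
  have hspos : ∀ a, 0 < s a := by
    intro a
    simp only [hsdef]
    split
    · exact hsupos
    · exact hslpos _ (by omega) (by have := a.isLt; omega)
  have hSinv : S⁻¹ = diagonal (fun a => (s a)⁻¹) := by
    rw [hS]
    apply Matrix.inv_eq_right_inv
    rw [Matrix.diagonal_mul_diagonal]
    have h1 : ∀ a : Fin k, s a * (s a)⁻¹ = 1 := fun a => mul_inv_cancel₀ (hspos a).ne'
    simp only [hsdef] at h1 ⊢
    simp [h1]
  have hE : ∀ a b : Fin k, (S * B * S⁻¹) a b = s a * B a b * (s b)⁻¹ := by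
    intro a b
    rw [hSinv, hS, Matrix.mul_diagonal, Matrix.diagonal_mul]
  have hBd : ∀ a : Fin k, B a a
      = (if (a : ℕ) = k - 1 then (1 : ℝ) else 0)
        + (w a.val + w (a.val + 1) + u (a.val + 1)) := by
    intro a
    rw [hB]
    simp [Matrix.add_apply, hL]
  have hBoff : ∀ a b : Fin k, a ≠ b → B a b = L a b := by
    intro a b hab
    rw [hB]
    simp [Matrix.add_apply, Matrix.diagonal_apply_ne _ hab]
  have hrow : ∀ j : Fin k, j ≠ i → |(S * B * S⁻¹) i j| =
      (if (j : ℕ) + 1 = (i : ℕ) then s i * w i.val * (s j)⁻¹ else 0)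
      + (if (j : ℕ) = (i : ℕ) + 1 then s i * w ((i : ℕ) + 1) * (s j)⁻¹ else 0) := by
    intro j hji
    have hij : ¬ i = j := fun h => hji h.symm
    rw [hE, hBoff i j (Ne.symm hji), hL, if_neg hij]
    by_cases h1 : (j : ℕ) = (i : ℕ) + 1
    · rw [if_pos h1, if_neg (by omega : ¬ (j : ℕ) + 1 = (i : ℕ)), if_pos h1]
      have hwp : 0 < w ((i : ℕ) + 1) :=
        hwpos _ (by omega) (by have := j.isLt; omega)
      rw [show s i * -w ((i : ℕ) + 1) * (s j)⁻¹
          = -(s i * w ((i : ℕ) + 1) * (s j)⁻¹) by ring, abs_neg,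
        abs_of_pos (mul_pos (mul_pos (hspos i) hwp) (inv_pos.2 (hspos j)))]
      ring
    · rw [if_neg h1, if_neg h1]
      by_cases h2 : (i : ℕ) = (j : ℕ) + 1
      · rw [if_pos h2, if_pos (by omega : (j : ℕ) + 1 = (i : ℕ))]
        have hwp : 0 < w ((j : ℕ) + 1) :=
          hwpos _ (by omega) (by have := i.isLt; omega)
        rw [show s i * -w ((j : ℕ) + 1) * (s j)⁻¹
            = -(s i * w ((j : ℕ) + 1) * (s j)⁻¹) by ring, abs_neg,
          abs_of_pos (mul_pos (mul_pos (hspos i) hwp) (inv_pos.2 (hspos j)))]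
        rw [show (j : ℕ) + 1 = (i : ℕ) from by omega]
        ring
      · rw [if_neg h2, if_neg (by omega : ¬ (j : ℕ) + 1 = (i : ℕ))]
        simp
  have hsum0 : ∑ j ∈ Finset.univ.filter (fun j => j ≠ i), |(S * B * S⁻¹) i j|
      = (∑ j : Fin k, (if (j : ℕ) + 1 = (i : ℕ) then s i * w i.val * (s j)⁻¹ else 0))
        + ∑ j : Fin k, (if (j : ℕ) = (i : ℕ) + 1 then s i * w ((i : ℕ) + 1) * (s j)⁻¹ else 0) := by
    rw [Finset.filter_ne', ← Finset.sum_add_distrib]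
    rw [Finset.sum_congr rfl (fun j hj => hrow j (Finset.ne_of_mem_erase hj))]
    exact Finset.sum_erase _ (by simp)
  have hdiag : (S * B * S⁻¹) i i = B i i := by
    rw [hE, mul_comm (s i) (B i i), mul_assoc, mul_inv_cancel₀ (hspos i).ne', mul_one]
  rw [hsum0, hdiag, hBd]
  by_cases hlast : (i : ℕ) = k - 1
  · -- last row
    have hL1 : (∑ j : Fin k, (if (j : ℕ) + 1 = (i : ℕ) then s i * w i.val * (s j)⁻¹ else 0))
        = su * w (k - 1) * (sl (k - 1))⁻¹ := by
      simp only [show ∀ n : ℕ, (n + 1 = (i : ℕ)) ↔ (n = k - 2) from fun n => by omega]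
      rw [sum_ite_fin (k - 2) (fun j => s i * w i.val * (s j)⁻¹),
        dif_pos (by omega : k - 2 < k)]
      have h1 : s i = su := by simp only [hsdef]; rw [if_pos hlast]
      have h2 : s ⟨k - 2, by omega⟩ = sl (k - 1) := by
        simp only [hsdef]
        rw [if_neg (by omega)]
        have h3 : (⟨k - 2, by omega⟩ : Fin k).val + 1 = k - 1 := by
          show k - 2 + 1 = k - 1; omega
        rw [h3]
      rw [h1, h2, hlast]
    have hR1 : (∑ j : Fin k, (if (j : ℕ) = (i : ℕ) + 1 then s i * w ((i : ℕ) + 1) * (s j)⁻¹ else 0))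
        = 0 := by
      rw [sum_ite_fin ((i : ℕ) + 1) (fun j => s i * w ((i : ℕ) + 1) * (s j)⁻¹),
        dif_neg (by omega)]
    rw [hL1, hR1, if_pos hlast, hlast, show k - 1 + 1 = k by omega]
    have hkey : su * ((sl (k - 1))⁻¹ * w (k - 1)) = (w (k - 1) + w k + u k) + 1 - T := by
      rw [hsu]
      exact div_mul_cancel₀ _ (mul_ne_zero (inv_ne_zero (hslpos _ hk1 le_rfl).ne')
        (hwpos _ hk1 le_rfl).ne')
    have heq : su * w (k - 1) * (sl (k - 1))⁻¹ = su * ((sl (k - 1))⁻¹ * w (k - 1)) := by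
      ring
    linarith
  · -- interior row
    have hiub : (i : ℕ) < k - 1 := by have := i.isLt; omega
    set m : ℕ := (i : ℕ) + 1 with hm
    have hm1 : 1 ≤ m := by omega
    have hm2 : m ≤ k - 1 := by omega
    have hsim : s i = sl m := by simp only [hsdef]; rw [if_neg hlast]
    have hD := hden m hm1 hm2
    have hrec := hslrec m hm1 hm2
    have hmm : m - 1 = (i : ℕ) := by omega
    rw [hmm] at hD hrec
    have hwm : 0 < w m := hwpos m hm1 hm2
    have hslm : 0 < sl m := hslpos m hm1 hm2
    have hslm1 : 0 < sl (m + 1) := by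
      rw [hrec]; exact div_pos (mul_pos hslm hwm) hD
    have hcR : (∑ j : Fin k, (if (j : ℕ) = (i : ℕ) + 1 then s i * w ((i : ℕ) + 1) * (s j)⁻¹ else 0))
        ≤ (w (i : ℕ) + w m + u m) - sl m * w (i : ℕ) - T := by
      rw [sum_ite_fin ((i : ℕ) + 1) (fun j => s i * w ((i : ℕ) + 1) * (s j)⁻¹),
        dif_pos (by omega : (i : ℕ) + 1 < k)]
      have hval : sl m * w m * (sl (m + 1))⁻¹
          = (w (i : ℕ) + w m + u m) - sl m * w (i : ℕ) - T := by
        rw [hrec, inv_div, mul_div_assoc', mul_comm, mul_div_assoc,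
          div_self (mul_pos hslm hwm).ne', mul_one]
      have hbound : (s ⟨(i : ℕ) + 1, by omega⟩)⁻¹ ≤ (sl (m + 1))⁻¹ := by
        by_cases h2 : (i : ℕ) + 1 = k - 1
        · have hval2 : s ⟨(i : ℕ) + 1, by omega⟩ = su := by
            simp only [hsdef]
            rw [if_pos (by omega)]
          rw [hval2, show m + 1 = k from by omega]
          exact inv_anti₀ hslk hsuge
        · have hval2 : s ⟨(i : ℕ) + 1, by omega⟩ = sl (m + 1) := by
            simp only [hsdef]
            rw [if_neg (by omega)]
          rw [hval2]
      calc s i * w ((i : ℕ) + 1) * (s ⟨(i : ℕ) + 1, by omega⟩)⁻¹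
          ≤ s i * w ((i : ℕ) + 1) * (sl (m + 1))⁻¹ := by
            apply mul_le_mul_of_nonneg_left hbound
            exact (mul_pos (hspos i) (hwpos _ (by omega) (by omega))).le
        _ = sl m * w m * (sl (m + 1))⁻¹ := by rw [hsim]
        _ = _ := hval
    have hcL : (∑ j : Fin k, (if (j : ℕ) + 1 = (i : ℕ) then s i * w i.val * (s j)⁻¹ else 0))
        ≤ sl m * w (i : ℕ) := by
      by_cases h0 : (i : ℕ) = 0
      · have hz : (∑ j : Fin k, (if (j : ℕ) + 1 = (i : ℕ) then s i * w i.val * (s j)⁻¹ else 0)) = 0 :=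
          Finset.sum_eq_zero (fun j _ => if_neg (by omega))
        rw [hz, h0, hw0, mul_zero]
      · simp only [show ∀ n : ℕ, (n + 1 = (i : ℕ)) ↔ (n = (i : ℕ) - 1) from fun n => by omega]
        rw [sum_ite_fin ((i : ℕ) - 1) (fun j => s i * w i.val * (s j)⁻¹),
          dif_pos (by omega : (i : ℕ) - 1 < k)]
        have hsj : s ⟨(i : ℕ) - 1, by omega⟩ = sl (i : ℕ) := by
          simp only [hsdef]
          rw [if_neg (by omega)]
          have h3 : (⟨(i : ℕ) - 1, by omega⟩ : Fin k).val + 1 = (i : ℕ) := by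
            show (i : ℕ) - 1 + 1 = (i : ℕ); omega
          rw [h3]
        rw [hsj, hsim]
        have hsli : 1 ≤ sl (i : ℕ) := hslge _ (by omega) (by omega)
        have hwi : 0 < w (i : ℕ) := hwpos _ (by omega) (by omega)
        calc sl m * w (i : ℕ) * (sl (i : ℕ))⁻¹
            ≤ sl m * w (i : ℕ) * 1 := by
              apply mul_le_mul_of_nonneg_left _ (mul_pos hslm hwi).le
              exact inv_le_one_of_one_le₀ hsli
          _ = sl m * w (i : ℕ) := mul_one _
    rw [if_neg hlast]
    linarith
end

section
/- Let n ≥ 1 and M ≥ 1, and let w°_{ij} ≥ 0 for all 1 ≤ i < j ≤ n with j − i ≤ M be the edge weights of an M-hop path graph G° (set w°_{ij} = 0 when j − i > M; G° has no self-loops). Let L° be its graph Laplacian, so that xᵀL°x = Σ_{i<j} w°_{ij}(x_i − x_j)². Let ℒ be the generalized graph Laplacian of the 1-hop path graph with edge weights w_{i,i+1} = w°_{i,i+1} for 1 ≤ i ≤ n−1 and self-loop weights u_i = 2 · Σ_{j : |j−i| ≥ 2} w°_{min(i,j), max(i,j)} at each node i, so that xᵀℒx = Σ_{i=1}^{n−1}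 w°_{i,i+1}(x_i − x_{i+1})² + Σ_i u_i x_i². Then ℒ − L° is positive semidefinite, i.e., xᵀL°x ≤ xᵀℒx for all x ∈ ℝⁿ. -/
/-- Graph Unfolding 2 applied to a whole M-hop elaborated path graph:
with edge weights w°_{ij} ≥ 0 supported on pairs i < j with j − i ≤ M, the 1-hop path
graph keeping the 1-hop edges and adding at each node i the self-loop
u_i = 2 Σ_{j : |j−i| ≥ 2} w°_{min(i,j),max(i,j)} has a generalized Laplacian dominating
the original Laplacian: xᵀL°x ≤ xᵀℒx for all x ∈ ℝⁿ. -/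
theorem stmt11 {n M : ℕ} (hn : 1 ≤ n) (hM : 1 ≤ M)
    (wo : Fin n → Fin n → ℝ)
    (hnn : ∀ i j, 0 ≤ wo i j)
    (hhop : ∀ i j : Fin n, i < j → M < (j : ℕ) - (i : ℕ) → wo i j = 0)
    (u : Fin n → ℝ)
    (hu : ∀ i : Fin n, u i = 2 * ∑ j : Fin n,
      (if (i : ℕ) + 2 ≤ (j : ℕ) ∨ (j : ℕ) + 2 ≤ (i : ℕ)
        then wo (min i j) (max i j) else 0)) :
    ∀ x : Fin n → ℝ,
      (∑ i : Fin n, ∑ j : Fin n, if i < j then wo i j * (x i - x j) ^ 2 else 0)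
        ≤ (∑ i : Fin n, ∑ j : Fin n,
            if (j : ℕ) = (i : ℕ) + 1 then wo i j * (x i - x j) ^ 2 else 0)
            + ∑ i : Fin n, u i * (x i) ^ 2 := by
  intro x
  -- termwise key inequality
  have key : ∀ i j : Fin n,
      (if i < j then wo i j * (x i - x j) ^ 2 else 0) ≤
      (if (j : ℕ) = (i : ℕ) + 1 then wo i j * (x i - x j) ^ 2 else 0)
      + ((if (i : ℕ) + 2 ≤ (j : ℕ) then 2 * wo i j * (x i) ^ 2 else 0)
        + (if (i : ℕ) + 2 ≤ (j : ℕ) then 2 * wo i j * (x j) ^ 2 else 0)) := by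
    intro i j
    by_cases h : i < j
    · have hij : (i : ℕ) < (j : ℕ) := h
      by_cases h1 : (j : ℕ) = (i : ℕ) + 1
      · have h2 : ¬ ((i : ℕ) + 2 ≤ (j : ℕ)) := by omega
        simp [h, h1, h2]
      · have h2 : (i : ℕ) + 2 ≤ (j : ℕ) := by omega
        simp only [if_pos h, if_neg h1, if_pos h2, zero_add]
        nlinarith [mul_nonneg (hnn i j) (sq_nonneg (x i + x j))]
    · have hij : ¬ ((i : ℕ) < (j : ℕ)) := h
      have h1 : ¬ ((j : ℕ) = (i : ℕ) + 1) := by omega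
      have h2 : ¬ ((i : ℕ) + 2 ≤ (j : ℕ)) := by omega
      simp [h, h1, h2]
  have step := Finset.sum_le_sum
    (fun i (_ : i ∈ Finset.univ) => Finset.sum_le_sum
      (fun j (_ : j ∈ Finset.univ) => key i j))
  refine le_trans step ?_
  rw [show (∑ i : Fin n, ∑ j : Fin n,
      ((if (j : ℕ) = (i : ℕ) + 1 then wo i j * (x i - x j) ^ 2 else 0)
      + ((if (i : ℕ) + 2 ≤ (j : ℕ) then 2 * wo i j * (x i) ^ 2 else 0)
        + (if (i : ℕ) + 2 ≤ (j : ℕ) then 2 * wo i j * (x j) ^ 2 else 0))))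
    = (∑ i : Fin n, ∑ j : Fin n,
        if (j : ℕ) = (i : ℕ) + 1 then wo i j * (x i - x j) ^ 2 else 0)
      + ((∑ i : Fin n, ∑ j : Fin n,
          if (i : ℕ) + 2 ≤ (j : ℕ) then 2 * wo i j * (x i) ^ 2 else 0)
        + (∑ i : Fin n, ∑ j : Fin n,
          if (i : ℕ) + 2 ≤ (j : ℕ) then 2 * wo i j * (x j) ^ 2 else 0))
    from by simp [Finset.sum_add_distrib]]
  gcongr
  -- now show the two self-loop sums equal ∑ u i x i ^2
  have hswap : (∑ i : Fin n, ∑ j : Fin n,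
      if (i : ℕ) + 2 ≤ (j : ℕ) then 2 * wo i j * (x j) ^ 2 else 0)
    = ∑ i : Fin n, ∑ j : Fin n,
      if (j : ℕ) + 2 ≤ (i : ℕ) then 2 * wo j i * (x i) ^ 2 else 0 := by
    rw [Finset.sum_comm]
  rw [hswap, ← Finset.sum_add_distrib]
  apply le_of_eq
  refine Finset.sum_congr rfl (fun i _ => ?_)
  rw [← Finset.sum_add_distrib, hu i, Finset.mul_sum, Finset.sum_mul]
  refine Finset.sum_congr rfl (fun j _ => ?_)
  by_cases hA : (i : ℕ) + 2 ≤ (j : ℕ)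
  · have hB : ¬ ((j : ℕ) + 2 ≤ (i : ℕ)) := by omega
    have hle : i ≤ j := by
      rw [Fin.le_def]; omega
    simp [hA, hB, min_eq_left hle, max_eq_right hle]
  · by_cases hB : (j : ℕ) + 2 ≤ (i : ℕ)
    · have hle : j ≤ i := by rw [Fin.le_def]; omega
      simp [hA, hB, min_eq_right hle, max_eq_left hle]
    · simp [hA, hB]
end

section
/- Let ℒ ∈ ℝ^{n×n} be a symmetric tridiagonal matrix with nonpositive off-diagonal entries (ℒ_{i,j} = 0 for |i−j| ≥ 2 and ℒ_{i,i+1} = ℒ_{i+1,i} ≤ 0), and let v ∈ ℝⁿ be a strictly positive vector (v_i > 0 for all i) satisfying ℒ v = λ v for some λ ∈ ℝ. Define α_i = v_{i+1}/v_i for 1 ≤ i ≤ n−1, and let P = Diag(1/v_1, …, 1/v_n). Then: (i) (PℒP⁻¹)𝟏 = λ𝟏, where 𝟏 is the all-ones vector; (ii) λ = ℒ_{1,1} − α_1|ℒ_{1,2}|, and for 2 ≤ i ≤ n−1, λ = ℒ_{i,i} − α_{i−1}⁻¹|ℒ_{i,i−1}| − α_i|ℒ_{i,i+1}|; (iii)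 every Gershgorin disc left-end of PℒP⁻¹ equals λ, i.e., (PℒP⁻¹)_{ii} − Σ_{j≠i}|(PℒP⁻¹)_{ij}| = λ for every row i. -/
/-!
Conjugating by `D = Diag(v)` turns `L` into `M = D⁻¹ L D` with `M i j = L i j * v j / v i`.
The eigen-equation `L v = λ v` says exactly that every row of `M` sums to `λ`, and since `v > 0`
the off-diagonal entries of `M` keep the sign of those of `L`, i.e. are nonpositive. For such a
matrix the Gershgorin left-end `M i i - ∑_{j ≠ i} |M i j|` of a row is its row sum, hence `λ`.
For a tridiagonal `L` only the neighbours `i ± 1` contribute to the sum, which gives the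
explicit recursion in the ratios `v (i + 1) / v i`.
-/

open Matrix

namespace Matrix

section Similarity

variable {ι K : Type*} [Fintype ι] [DecidableEq ι] [Field K]

theorem inv_diagonal_inv {v : ι → K} (hv : ∀ i, v i ≠ 0) :
    (diagonal fun i => (v i)⁻¹)⁻¹ = diagonal v := by
  refine inv_eq_right_inv ?_
  rw [diagonal_mul_diagonal, ← diagonal_one]
  exact congrArg diagonal (funext fun i => inv_mul_cancel₀ (hv i))

theorem diagonal_inv_mul_mul_diagonal_apply (v : ι → K) (L : Matrix ι ι K) (i j : ι) :
    (diagonal (fun i => (v i)⁻¹) * L * diagonal v) i j = (v i)⁻¹ * L i j * v j := by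
  rw [mul_diagonal, diagonal_mul]

theorem diagonal_inv_mul_mul_diagonal_apply_self {v : ι → K} {i : ι} (hv : v i ≠ 0)
    (L : Matrix ι ι K) : (diagonal (fun i => (v i)⁻¹) * L * diagonal v) i i = L i i := by
  rw [diagonal_inv_mul_mul_diagonal_apply, mul_comm, mul_inv_cancel_left₀ hv]

theorem diagonal_inv_mul_mul_diagonal_mulVec_one {v : ι → K} (hv : ∀ i, v i ≠ 0)
    {L : Matrix ι ι K} {lam : K} (heig : L *ᵥ v = lam • v) :
    (diagonal (fun i => (v i)⁻¹) * L * diagonal v) *ᵥ (fun _ => 1) = fun _ => lam := by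
  have hD : diagonal v *ᵥ (fun _ => (1 : K)) = v := funext fun i => by
    rw [mulVec_diagonal, mul_one]
  funext i
  rw [← mulVec_mulVec, ← mulVec_mulVec, hD, heig, mulVec_diagonal, Pi.smul_apply, smul_eq_mul,
    mul_left_comm, inv_mul_cancel₀ (hv i), mul_one]

end Similarity

section Gershgorin

variable {ι : Type*} [Fintype ι] [DecidableEq ι]

theorem diag_sub_sum_abs_eq_mulVec_one {R : Type*} [CommRing R] [LinearOrder R]
    [IsStrictOrderedRing R] (M : Matrix ι ι R) (i : ι) (hM : ∀ j, j ≠ i → M i j ≤ 0) :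
    M i i - ∑ j ∈ Finset.univ.filter (fun j => j ≠ i), |M i j| = (M *ᵥ fun _ => 1) i := by
  rw [Finset.filter_ne',
    Finset.sum_congr rfl fun j hj => abs_of_nonpos (hM j (Finset.ne_of_mem_erase hj)),
    Finset.sum_neg_distrib, sub_neg_eq_add, mulVec, dotProduct,
    ← Finset.add_sum_erase _ _ (Finset.mem_univ i)]
  simp only [mul_one]

variable {K : Type*} [Field K] [LinearOrder K] [IsStrictOrderedRing K]

theorem diagonal_inv_mul_mul_diagonal_apply_nonpos {v : ι → K} (hv : ∀ i, 0 < v i)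
    {L : Matrix ι ι K} {i j : ι} (hL : L i j ≤ 0) :
    (diagonal (fun i => (v i)⁻¹) * L * diagonal v) i j ≤ 0 := by
  rw [diagonal_inv_mul_mul_diagonal_apply]
  exact mul_nonpos_of_nonpos_of_nonneg
    (mul_nonpos_of_nonneg_of_nonpos (inv_nonneg.2 (hv i).le) hL) (hv j).le

theorem abs_diagonal_inv_mul_mul_diagonal_apply {v : ι → K} (hv : ∀ i, 0 < v i)
    (L : Matrix ι ι K) (i j : ι) :
    |(diagonal (fun i => (v i)⁻¹) * L * diagonal v) i j| = v j / v i * |L i j| := by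
  rw [diagonal_inv_mul_mul_diagonal_apply, abs_mul, abs_mul, abs_inv, abs_of_pos (hv i),
    abs_of_pos (hv j)]
  ring

end Gershgorin

end Matrix

section Tridiagonal

variable {n : ℕ}

theorem Matrix.offDiag_nonpos_of_tridiagonal {α : Type*} [Zero α] [Preorder α]
    {L : Matrix (Fin n) (Fin n) α} (hsym : L.IsSymm)
    (htri : ∀ i j : Fin n, ((i : ℕ) + 2 ≤ (j : ℕ) ∨ (j : ℕ) + 2 ≤ (i : ℕ)) → L i j = 0)
    (hoff : ∀ i j : Fin n, (j : ℕ) = (i : ℕ) + 1 → L i j ≤ 0) {i j : Fin n} (hij : i ≠ j) :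
    L i j ≤ 0 := by
  have upper : ∀ a b : Fin n, a < b → L a b ≤ 0 := fun a b hab => by
    by_cases hadj : (b : ℕ) = (a : ℕ) + 1
    · exact hoff a b hadj
    · exact (htri a b (Or.inl (by omega))).le
  rcases Fin.lt_or_lt_of_ne hij with h | h
  · exact upper i j h
  · exact hsym.apply j i ▸ upper j i h

variable {M : Type*} [AddCommMonoid M]

theorem Fin.sum_filter_ne_zero_eq_one (h1 : 1 < n) (f : Fin n → M)
    (hf : ∀ j : Fin n, 2 ≤ (j : ℕ) → f j = 0) :
    ∑ j ∈ Finset.univ.filter (fun j => j ≠ ⟨0, Nat.zero_lt_of_lt h1⟩), f j = f ⟨1, h1⟩ := by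
  refine Finset.sum_eq_single_of_mem _ (by simp [Fin.ext_iff]) fun j hj hj1 => hf j ?_
  simp only [Finset.mem_filter, Finset.mem_univ, true_and, ne_eq, Fin.ext_iff] at hj hj1
  omega

theorem Fin.sum_filter_ne_eq_pred_add_succ {i : ℕ} (h1 : 1 ≤ i) (h2 : i + 1 < n) (f : Fin n → M)
    (hf : ∀ j : Fin n, (i + 2 ≤ (j : ℕ) ∨ (j : ℕ) + 2 ≤ i) → f j = 0) :
    ∑ j ∈ Finset.univ.filter (fun j => j ≠ ⟨i, Nat.lt_of_succ_lt h2⟩), f j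
      = f ⟨i - 1, (i.sub_le 1).trans_lt (Nat.lt_of_succ_lt h2)⟩ + f ⟨i + 1, h2⟩ := by
  refine Finset.sum_eq_add_of_mem _ _ (by simp [Fin.ext_iff]; omega) (by simp [Fin.ext_iff])
    (by simp [Fin.ext_iff]) fun j hj hj' => hf j ?_
  simp only [Finset.mem_filter, Finset.mem_univ, true_and, ne_eq, Fin.ext_iff] at hj hj'
  omega

end Tridiagonal

/-- equations (19)–(22) of the paper, GDPA for a tridiagonal path-graph
Laplacian: for a symmetric tridiagonal ℒ with nonpositive off-diagonal entries and a
strictly positive eigenvector v with ℒv = λv, with α_i = v_{i+1}/v_i and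
P = Diag(1/v₁,…,1/vₙ): (i) (PℒP⁻¹)𝟏 = λ𝟏; (ii) λ = ℒ_{1,1} − α₁|ℒ_{1,2}| and
λ = ℒ_{i,i} − α_{i−1}⁻¹|ℒ_{i,i−1}| − α_i|ℒ_{i,i+1}| for 2 ≤ i ≤ n−1; (iii) every
Gershgorin disc left-end of PℒP⁻¹ equals λ. (Nodes 1,…,n are Fin values 0,…,n−1.) -/
theorem stmt14 {n : ℕ} (hn : 2 ≤ n)
    (L : Matrix (Fin n) (Fin n) ℝ) (hsym : L.IsSymm)
    (htri : ∀ i j : Fin n, ((i : ℕ) + 2 ≤ (j : ℕ) ∨ (j : ℕ) + 2 ≤ (i : ℕ)) → L i j = 0)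
    (hoff : ∀ i j : Fin n, (j : ℕ) = (i : ℕ) + 1 → L i j ≤ 0)
    (v : Fin n → ℝ) (hv : ∀ i, 0 < v i)
    (lam : ℝ) (heig : L.mulVec v = lam • v)
    (P : Matrix (Fin n) (Fin n) ℝ)
    (hP : P = Matrix.diagonal (fun i => (v i)⁻¹)) :
    ((P * L * P⁻¹).mulVec (fun _ => (1 : ℝ)) = fun _ => lam)
    ∧ (lam = L ⟨0, by omega⟩ ⟨0, by omega⟩
        - (v ⟨1, by omega⟩ / v ⟨0, by omega⟩) * |L ⟨0, by omega⟩ ⟨1, by omega⟩|)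
    ∧ (∀ (i : ℕ) (h1 : 1 ≤ i) (h2 : i + 1 < n),
        lam = L ⟨i, by omega⟩ ⟨i, by omega⟩
          - (v ⟨i, by omega⟩ / v ⟨i - 1, by omega⟩)⁻¹ * |L ⟨i, by omega⟩ ⟨i - 1, by omega⟩|
          - (v ⟨i + 1, by omega⟩ / v ⟨i, by omega⟩) * |L ⟨i, by omega⟩ ⟨i + 1, by omega⟩|)
    ∧ (∀ i : Fin n,
        (P * L * P⁻¹) i i
          - ∑ j ∈ Finset.univ.filter (fun j => j ≠ i), |(P * L * P⁻¹) i j| = lam) := by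
  have hvne : ∀ i, v i ≠ 0 := fun i => (hv i).ne'
  rw [hP, inv_diagonal_inv hvne]
  have hrow := diagonal_inv_mul_mul_diagonal_mulVec_one hvne heig
  have hleft : ∀ i, _ - ∑ j ∈ Finset.univ.filter (fun j => j ≠ i), _ = lam := fun i =>
    (diag_sub_sum_abs_eq_mulVec_one _ i fun j hji => diagonal_inv_mul_mul_diagonal_apply_nonpos hv
      (offDiag_nonpos_of_tridiagonal hsym htri hoff hji.symm)).trans (congrFun hrow i)
  have hfar : ∀ i j : Fin n, ((i : ℕ) + 2 ≤ (j : ℕ) ∨ (j : ℕ) + 2 ≤ (i : ℕ)) →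
      |(diagonal (fun i => (v i)⁻¹) * L * diagonal v) i j| = 0 := fun i j hij => by
    rw [abs_diagonal_inv_mul_mul_diagonal_apply hv, htri i j hij, abs_zero, mul_zero]
  refine ⟨hrow, ?_, fun i h1 h2 => ?_, hleft⟩
  · have h := hleft ⟨0, by omega⟩
    rw [Fin.sum_filter_ne_zero_eq_one (by omega) _ fun j hj => hfar _ j (Or.inl hj),
      diagonal_inv_mul_mul_diagonal_apply_self (hvne _),
      abs_diagonal_inv_mul_mul_diagonal_apply hv] at h
    exact h.symm
  · have h := hleft ⟨i, by omega⟩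
    rw [Fin.sum_filter_ne_eq_pred_add_succ h1 h2 _ fun j hj => hfar _ j hj,
      diagonal_inv_mul_mul_diagonal_apply_self (hvne _),
      abs_diagonal_inv_mul_mul_diagonal_apply hv, abs_diagonal_inv_mul_mul_diagonal_apply hv] at h
    rw [inv_div, ← h]
    ring
end
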